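/- arXiv:1803.01753 — 6 statements merged into one kernel-verified Lean document; each statement's English description precedes it below -/
import Mathlib

section
/- For n > k ≥ 1, the k-nearest neighbor platoon P(n,k) is k-vertex-connected: for every set S of fewer than k vertices, the graph P(n,k) with S removed remains connected. -/
/-- The `k`-nearest neighbor platoon: vertices `1, …, n` (as `Fin n`),
with `i ~ j` iff `0 < |i - j| ≤ k`. -/
def platoon (n k : ℕ) : SimpleGraph (Fin n) where
  Adj i j := i ≠ j ∧ ((i : ℤ) - (j : ℤ)).natAbs ≤ k
  symm := by
    constructor
    rintro i j ⟨h1, h2⟩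
    exact ⟨h1.symm, by omega⟩
  loopless := ⟨fun i h => h.1 rfl⟩

instance {n k : ℕ} : DecidableRel (platoon n k).Adj :=
  fun i j => inferInstanceAs (Decidable (i ≠ j ∧ ((i : ℤ) - (j : ℤ)).natAbs ≤ k))

/-- For `n > k ≥ 1`, the platoon `P(n,k)` is `k`-vertex-connected: removing any set of
fewer than `k` vertices leaves the graph connected. -/
theorem stmt_1 (n k : ℕ) (hk : 1 ≤ k) (hn : k < n)
    (S : Finset (Fin n)) (hS : S.card < k) :
    ((platoon n k).induce ((↑(Sᶜ) : Set (Fin n)))).Connected := by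
  have key : ∀ d : ℕ, ∀ u v : (↑(Sᶜ) : Set (Fin n)),
      (u : Fin n).val ≤ (v : Fin n).val → (v : Fin n).val - (u : Fin n).val ≤ d →
      ((platoon n k).induce ((↑(Sᶜ) : Set (Fin n)))).Reachable u v := by
    intro d
    induction d with
    | zero =>
      intro u v h1 h2
      have : u = v := Subtype.ext (Fin.ext (by omega))
      exact this ▸ SimpleGraph.Reachable.refl u
    | succ d ih =>
      intro u v h1 h2
      by_cases hle : (v : Fin n).val - (u : Fin n).val ≤ k
      · by_cases heq : u = v
        · exact heq ▸ SimpleGraph.Reachable.refl u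
        · apply SimpleGraph.Adj.reachable
          refine ⟨?_, ?_⟩
          · intro h
            exact heq (Subtype.ext h)
          · show (((u : Fin n) : ℤ) - ((v : Fin n) : ℤ)).natAbs ≤ k
            omega
      · push_neg at hle
        have hvlt := (v : Fin n).isLt
        have hv : (u : Fin n).val + k < n := by omega
        set W : Finset (Fin n) :=
          (Finset.univ.image (fun t : Fin k => (⟨(u : Fin n).val + 1 + t, by omega⟩ : Fin n)))
          with hW
        have hWcard : W.card = k := by
          rw [hW, Finset.card_image_of_injective, Finset.card_univ, Fintype.card_fin]
          intro a b hab
          have : (u : Fin n).val + 1 + a.val = (u : Fin n).val + 1 + b.val :=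
            congrArg Fin.val hab
          exact Fin.ext (by omega)
        have hex : ∃ m ∈ W, m ∉ S := by
          by_contra h
          push_neg at h
          have := Finset.card_le_card h
          omega
        obtain ⟨m, hmW, hmS⟩ := hex
        obtain ⟨t, -, ht⟩ := Finset.mem_image.mp hmW
        have hmval : m.val = (u : Fin n).val + 1 + t.val := by
          rw [← ht]
        have htk := t.isLt
        have hm : m ∈ (↑(Sᶜ) : Set (Fin n)) := by simpa using hmS
        have r1 : ((platoon n k).induce ((↑(Sᶜ) : Set (Fin n)))).Adj u ⟨m, hm⟩ := by
          refine ⟨?_, ?_⟩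
          · intro h
            have : (u : Fin n).val = m.val := congrArg Fin.val h
            omega
          · show (((u : Fin n) : ℤ) - (m : ℤ)).natAbs ≤ k
            omega
        have r2 := ih ⟨m, hm⟩ v (show m.val ≤ (v : Fin n).val by omega)
          (show (v : Fin n).val - m.val ≤ d by omega)
        exact r1.reachable.trans r2
  have hne : ((↑(Sᶜ) : Set (Fin n))).Nonempty := by
    have : (Sᶜ : Finset (Fin n)).Nonempty := by
      rw [← Finset.card_pos, Finset.card_compl]
      simp only [Fintype.card_fin]
      omega
    obtain ⟨x, hx⟩ := this
    exact ⟨x, by simpa using hx⟩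
  obtain ⟨x, hx⟩ := hne
  rw [SimpleGraph.connected_iff]
  refine ⟨fun u v => ?_, ⟨⟨x, hx⟩⟩⟩
  rcases le_total (u : Fin n).val (v : Fin n).val with h | h
  · exact key ((v : Fin n).val - (u : Fin n).val) u v h le_rfl
  · exact (key ((u : Fin n).val - (v : Fin n).val) v u h le_rfl).symm
end

section
/- Let G be the graph formed by two disjoint complete graphs K_n on vertex sets S_1 and S_2 (n ≥ 2), together with a perfect matching between S_1 and S_2 (each vertex of S_1 has exactly one neighbor in S_2 and vice versa). Then G is 1-robust but not 2-robust, even though its minimum degree is n. -/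
/-- A set `S` is `r`-reachable if some vertex of `S` has at least `r` neighbors outside `S`. -/
def rReachable {V : Type} [Fintype V] [DecidableEq V] (G : SimpleGraph V) [DecidableRel G.Adj]
    (S : Finset V) (r : ℕ) : Prop :=
  ∃ v ∈ S, r ≤ (G.neighborFinset v \ S).card

/-- A graph is `r`-robust if for every pair of nonempty disjoint vertex subsets,
at least one of them is `r`-reachable. -/
def rRobust {V : Type} [Fintype V] [DecidableEq V] (G : SimpleGraph V) [DecidableRel G.Adj]
    (r : ℕ) : Prop :=
  ∀ S₁ S₂ : Finset V, S₁.Nonempty → S₂.Nonempty → Disjoint S₁ S₂ →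
    rReachable G S₁ r ∨ rReachable G S₂ r

/-- Two disjoint copies of the complete graph `K_n` (on `Fin n × Bool`),
joined by a perfect matching: within a side, distinct vertices are adjacent;
across sides, vertices are adjacent iff they are the matched pair. -/
def twoCliques (n : ℕ) : SimpleGraph (Fin n × Bool) where
  Adj p q := (p.2 = q.2 ∧ p.1 ≠ q.1) ∨ (p.2 ≠ q.2 ∧ p.1 = q.1)
  symm := by
    constructor
    rintro p q (⟨h1, h2⟩ | ⟨h1, h2⟩)
    · exact Or.inl ⟨h1.symm, h2.symm⟩
    · exact Or.inr ⟨h1.symm, h2.symm⟩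
  loopless := by constructor; rintro p (⟨_, h⟩ | ⟨h, _⟩) <;> exact h rfl

instance {n : ℕ} : DecidableRel (twoCliques n).Adj := fun p q =>
  inferInstanceAs (Decidable ((p.2 = q.2 ∧ p.1 ≠ q.1) ∨ (p.2 ≠ q.2 ∧ p.1 = q.1)))

lemma twoCliques_adj {n : ℕ} {p q : Fin n × Bool} :
    (twoCliques n).Adj p q ↔ (p.2 = q.2 ∧ p.1 ≠ q.1) ∨ (p.2 ≠ q.2 ∧ p.1 = q.1) := Iff.rfl

lemma twoCliques_neighborFinset {n : ℕ} (i : Fin n) (b : Bool) :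
    (twoCliques n).neighborFinset (i, b) =
      insert (i, !b) ((Finset.univ.erase i).image (fun j => (j, b))) := by
  ext ⟨j, c⟩
  simp only [SimpleGraph.mem_neighborFinset, twoCliques_adj, Finset.mem_insert,
    Finset.mem_image, Finset.mem_erase, Finset.mem_univ, and_true, Prod.mk.injEq]
  constructor
  · rintro (⟨h1, h2⟩ | ⟨h1, h2⟩)
    · exact Or.inr ⟨j, ⟨fun h => h2 h.symm, rfl, h1⟩⟩
    · refine Or.inl ⟨h2.symm, ?_⟩
      cases b <;> cases c <;> simp_all
  · rintro (⟨rfl, rfl⟩ | ⟨k, hk, rfl, rfl⟩)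
    · exact Or.inr ⟨by cases b <;> simp, rfl⟩
    · exact Or.inl ⟨rfl, fun h => hk h.symm⟩

/-- Two complete graphs `K_n` joined by a perfect matching form a graph that is
`1`-robust but not `2`-robust, even though every vertex has degree `n`. -/
theorem stmt_8 (n : ℕ) (hn : 2 ≤ n) :
    (∀ v, (twoCliques n).degree v = n) ∧
    rRobust (twoCliques n) 1 ∧ ¬ rRobust (twoCliques n) 2 := by
  have hdeg : ∀ v, (twoCliques n).degree v = n := by
    rintro ⟨i, b⟩
    rw [SimpleGraph.degree, twoCliques_neighborFinset]
    rw [Finset.card_insert_of_notMem (by simp [Prod.ext_iff])]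
    rw [Finset.card_image_of_injective _ (fun a a' h => (Prod.mk.injEq _ _ _ _).mp h |>.1)]
    rw [Finset.card_erase_of_mem (Finset.mem_univ i)]
    simp only [Finset.card_univ, Fintype.card_fin]
    omega
  refine ⟨hdeg, ?_, ?_⟩
  · -- 1-robust
    intro S₁ S₂ hS₁ hS₂ hdisj
    by_contra hc
    push_neg at hc
    obtain ⟨h1, h2⟩ := hc
    have hclosed : ∀ v ∈ S₁, ∀ q, (twoCliques n).Adj v q → q ∈ S₁ := by
      intro v hv q hadj
      by_contra hq
      exact h1 ⟨v, hv, Finset.card_pos.mpr ⟨q, Finset.mem_sdiff.mpr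
        ⟨(SimpleGraph.mem_neighborFinset _ _ _).mpr hadj, hq⟩⟩⟩
    obtain ⟨⟨i, b⟩, hv⟩ := hS₁
    obtain ⟨w, hw⟩ := hS₂
    have hwS₁ : w ∉ S₁ := fun h => (Finset.disjoint_left.mp hdisj h) hw
    apply hwS₁
    have hsame : ∀ j : Fin n, (j, b) ∈ S₁ := by
      intro j
      by_cases h : j = i
      · subst h; exact hv
      · exact hclosed _ hv _ (Or.inl ⟨rfl, fun h' => h h'.symm⟩)
    have hall : ∀ j : Fin n, ∀ c : Bool, (j, c) ∈ S₁ := by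
      intro j c
      by_cases h : c = b
      · subst h; exact hsame j
      · exact hclosed _ (hsame j) _ (Or.inr ⟨fun h' => h h'.symm, rfl⟩)
    exact hall w.1 w.2
  · -- not 2-robust
    intro hrob
    have hne : ∀ c : Bool, (Finset.univ.filter (fun p : Fin n × Bool => p.2 = c)).Nonempty :=
      fun c => ⟨(⟨0, by omega⟩, c), by simp⟩
    have hkey : ∀ c : Bool, ¬ rReachable (twoCliques n)
        (Finset.univ.filter (fun p : Fin n × Bool => p.2 = c)) 2 := by
      rintro c ⟨⟨i, d⟩, hv, hcard⟩
      simp only [Finset.mem_filter] at hv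
      have hd : d = c := hv.2
      subst hd
      have : (twoCliques n).neighborFinset (i, d) \
          (Finset.univ.filter (fun p : Fin n × Bool => p.2 = d)) = {(i, !d)} := by
        rw [twoCliques_neighborFinset]
        ext ⟨j, e⟩
        simp only [Finset.mem_sdiff, Finset.mem_insert, Finset.mem_image, Finset.mem_erase,
          Finset.mem_univ, and_true, Finset.mem_filter, true_and, Finset.mem_singleton,
          Prod.mk.injEq]
        constructor
        · rintro ⟨(⟨rfl, rfl⟩ | ⟨k, hk, rfl, rfl⟩), h2⟩
          · exact ⟨rfl, rfl⟩
          · exact absurd rfl h2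
        · rintro ⟨rfl, rfl⟩
          exact ⟨Or.inl ⟨rfl, rfl⟩, by cases d <;> simp⟩
      rw [this, Finset.card_singleton] at hcard
      omega
    rcases hrob (Finset.univ.filter (fun p => p.2 = false))
        (Finset.univ.filter (fun p => p.2 = true)) (hne false) (hne true)
        (by simp [Finset.disjoint_left]) with h | h
    · exact hkey false h
    · exact hkey true h
end

section
/- For the k-nearest neighbor platoon P(n,k) with n ≥ 2k, the isoperimetric constant satisfies i(P(n,k)) ≤ k(k+1)/(2·⌊n/2⌋), witnessed by taking S = {1, 2, ..., ⌊n/2⌋}: the edge boundary of S has exactly k(k+1)/2 edges. -/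
open Classical in
/-- The edge boundary `∂S`: edges with exactly one endpoint in `S`. -/
noncomputable def edgeBoundary {V : Type} [Fintype V] [DecidableEq V] (G : SimpleGraph V)
    [DecidableRel G.Adj] (S : Finset V) : Finset (Sym2 V) :=
  G.edgeFinset.filter (fun e => ∃ u ∈ S, ∃ v, v ∉ S ∧ e = s(u, v))

/-- The isoperimetric constant `i(G) = min_{S ≠ ∅, |S| ≤ n/2} |∂S| / |S|`. -/
noncomputable def isoConst {V : Type} [Fintype V] [DecidableEq V] (G : SimpleGraph V)
    [DecidableRel G.Adj] : ℝ :=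
  sInf { r : ℝ | ∃ S : Finset V, S.Nonempty ∧ 2 * S.card ≤ Fintype.card V ∧
    r = (edgeBoundary G S).card / S.card }

lemma aux_boundary_card (n k : ℕ) (hk : 1 ≤ k) (hn : 2 * k ≤ n) :
    (edgeBoundary (platoon n k)
        (Finset.univ.filter (fun i : Fin n => (i : ℕ) < n / 2))).card = k * (k + 1) / 2 := by
  set m := n / 2 with hm
  have hkm : k ≤ m := by omega
  have h2m : 2 * m ≤ n := by omega
  have hm1 : 1 ≤ m := by omega
  set S : Finset (Fin n) := Finset.univ.filter (fun i : Fin n => (i : ℕ) < m) with hS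
  set T : Finset ((_ : ℕ) × ℕ) := (Finset.range k).sigma (fun a => Finset.range (k - a))
    with hT
  have hTcard : T.card = k * (k + 1) / 2 := by
    rw [hT, Finset.card_sigma]
    simp only [Finset.card_range]
    have h1 : ∑ a ∈ Finset.range k, (k - a) = ∑ a ∈ Finset.range k, (a + 1) := by
      rw [← Finset.sum_range_reflect]
      apply Finset.sum_congr rfl
      intro x hx
      simp only [Finset.mem_range] at hx
      omega
    rw [h1]
    have h2 : ∑ a ∈ Finset.range (k + 1), a = (∑ a ∈ Finset.range k, (a + 1)) + 0 :=
      Finset.sum_range_succ' id k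
    have h3 := Finset.sum_range_id_mul_two (k + 1)
    have h4 : (k + 1) * (k + 1 - 1) = k * (k + 1) := by rw [Nat.add_sub_cancel]; ring
    omega
  have key : T.card = (edgeBoundary (platoon n k) S).card := by
    apply Finset.card_bij
      (fun p hp => s((⟨m - 1 - p.1, by omega⟩ : Fin n),
        (⟨m + p.2, by
          have := Finset.mem_sigma.mp hp
          simp only [Finset.mem_range] at this
          omega⟩ : Fin n)))
    · intro p hp
      obtain ⟨a, b⟩ := p
      have hab := Finset.mem_sigma.mp hp
      simp only [Finset.mem_range] at hab
      obtain ⟨ha, hb⟩ := hab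
      simp only [edgeBoundary, Finset.mem_filter]
      constructor
      · rw [SimpleGraph.mem_edgeFinset, SimpleGraph.mem_edgeSet]
        constructor
        · intro h
          have := congrArg Fin.val h
          simp only [Fin.val_mk] at this
          omega
        · show ((((⟨m - 1 - a, _⟩ : Fin n) : ℕ) : ℤ) - (((⟨m + b, _⟩ : Fin n) : ℕ) : ℤ)).natAbs ≤ k
          simp only [Fin.val_mk]
          omega
      · refine ⟨⟨m - 1 - a, by omega⟩, ?_, ⟨m + b, by omega⟩, ?_, rfl⟩
        · rw [hS, Finset.mem_filter]
          exact ⟨Finset.mem_univ _, by simp; omega⟩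
        · rw [hS, Finset.mem_filter]
          simp
    · intro p hp q hq heq
      obtain ⟨a, b⟩ := p
      obtain ⟨c, d⟩ := q
      rw [Sym2.eq_iff] at heq
      rcases heq with ⟨h1, h2⟩ | ⟨h1, h2⟩ <;>
        [skip;
         exact absurd (congrArg Fin.val h1) (by simp; omega)] <;>
      · have e1 := congrArg Fin.val h1
        have e2 := congrArg Fin.val h2
        simp only [Fin.val_mk] at e1 e2
        have hab := Finset.mem_sigma.mp hp
        have hcd := Finset.mem_sigma.mp hq
        simp only [Finset.mem_range] at hab hcd
        have : a = c := by omega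
        subst this
        have : b = d := by omega
        subst this
        rfl
    · intro e he
      simp only [edgeBoundary, Finset.mem_filter] at he
      obtain ⟨hedge, u, hu, v, hv, rfl⟩ := he
      rw [SimpleGraph.mem_edgeFinset, SimpleGraph.mem_edgeSet] at hedge
      obtain ⟨hne, hd⟩ := hedge
      rw [hS, Finset.mem_filter] at hu hv
      have hu' : (u : ℕ) < m := hu.2
      have hv' : ¬ (v : ℕ) < m := fun h => hv ⟨Finset.mem_univ _, h⟩
      have hd' : ((u : ℕ) : ℤ) - ((v : ℕ) : ℤ) = (u : ℤ) - (v : ℤ) := by push_cast; ring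
      rw [← hd'] at hd
      have hvu : (v : ℕ) - (u : ℕ) ≤ k := by omega
      refine ⟨⟨m - 1 - (u : ℕ), (v : ℕ) - m⟩, ?_, ?_⟩
      · rw [hT, Finset.mem_sigma]
        simp only [Finset.mem_range]
        omega
      · rw [Sym2.eq_iff]
        left
        constructor <;> apply Fin.ext <;> simp only [Fin.val_mk] <;> omega
  omega

/-- For `P(n,k)` with `n ≥ 2k`, taking `S = {1, …, ⌊n/2⌋}`, the edge boundary of `S`
has exactly `k(k+1)/2` edges, whence `i(P(n,k)) ≤ k(k+1)/(2⌊n/2⌋)`. -/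
theorem stmt_9 (n k : ℕ) (hk : 1 ≤ k) (hn : 2 * k ≤ n) :
    (edgeBoundary (platoon n k)
        (Finset.univ.filter (fun i : Fin n => (i : ℕ) < n / 2))).card = k * (k + 1) / 2 ∧
    isoConst (platoon n k) ≤ (k * (k + 1) : ℝ) / (2 * (n / 2 : ℕ)) := by
  have hb := aux_boundary_card n k hk hn
  refine ⟨hb, ?_⟩
  set m := n / 2 with hm
  have hkm : k ≤ m := by omega
  have hm1 : 1 ≤ m := by omega
  set S : Finset (Fin n) := Finset.univ.filter (fun i : Fin n => (i : ℕ) < m) with hS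
  have hScard : S.card = m := by
    symm
    rw [← Finset.card_range m]
    apply Finset.card_bij (fun a ha => (⟨a, by
      simp only [Finset.mem_range] at ha; omega⟩ : Fin n))
    · intro a ha
      simp only [Finset.mem_range] at ha
      rw [hS, Finset.mem_filter]
      exact ⟨Finset.mem_univ _, ha⟩
    · intro a ha b hb heq
      simpa using congrArg Fin.val heq
    · intro x hx
      rw [hS, Finset.mem_filter] at hx
      exact ⟨(x : ℕ), Finset.mem_range.mpr hx.2, Fin.ext rfl⟩
  have hSne : S.Nonempty := Finset.card_pos.mp (by omega)
  have hmem : (((edgeBoundary (platoon n k) S).card : ℝ) / (S.card : ℝ)) ∈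
      { r : ℝ | ∃ S' : Finset (Fin n), S'.Nonempty ∧ 2 * S'.card ≤ Fintype.card (Fin n) ∧
        r = (edgeBoundary (platoon n k) S').card / S'.card } := by
    exact ⟨S, hSne, by rw [Fintype.card_fin]; omega, rfl⟩
  have hbdd : BddBelow { r : ℝ | ∃ S' : Finset (Fin n), S'.Nonempty ∧
      2 * S'.card ≤ Fintype.card (Fin n) ∧
      r = (edgeBoundary (platoon n k) S').card / S'.card } := by
    refine ⟨0, ?_⟩
    rintro r ⟨S', _, _, rfl⟩
    positivity
  have hle := csInf_le hbdd hmem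
  rw [isoConst]
  refine hle.trans ?_
  rw [hb, hScard]
  have heven : 2 ∣ k * (k + 1) := (Nat.even_mul_succ_self k).two_dvd
  have hcast : ((k * (k + 1) / 2 : ℕ) : ℝ) = (k : ℝ) * ((k : ℝ) + 1) / 2 := by
    rw [Nat.cast_div heven (by norm_num)]
    push_cast
    ring
  rw [hcast, div_div]
end

section
/- For λ > 0 and k_p, k_u > 0, the function λ ↦ H(λ), where H(λ) = 2/(k_u λ √(4k_p - k_u² λ)) when k_u² λ/(2k_p) ≤ 1 and H(λ) = 1/(k_p √λ) otherwise, is monotonically decreasing in λ on (0, ∞) (on the domain where defined, i.e., 4k_p - k_u²λ > 0 in the first regime). -/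
open Classical in
/-- The H∞ norm `H(λ)` of the transfer function `√λ/(s² + kᵤ λ s + kₚ λ)`
as a function of the Laplacian eigenvalue `λ`. -/
noncomputable def Hinf (kp ku lam : ℝ) : ℝ :=
  if ku ^ 2 * lam / (2 * kp) ≤ 1 then
    2 / (ku * lam * Real.sqrt (4 * kp - ku ^ 2 * lam))
  else
    1 / (kp * Real.sqrt lam)

lemma branch1_lt (kp ku : ℝ) (hkp : 0 < kp) (hku : 0 < ku) {a b : ℝ}
    (ha : 0 < a) (hab : a < b) (hb : ku ^ 2 * b ≤ 2 * kp) :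
    2 / (ku * b * Real.sqrt (4 * kp - ku ^ 2 * b)) <
      2 / (ku * a * Real.sqrt (4 * kp - ku ^ 2 * a)) := by
  have hb0 : 0 < b := ha.trans hab
  have hku2 : 0 < ku ^ 2 := pow_pos hku 2
  have hB : 0 < 4 * kp - ku ^ 2 * b := by nlinarith
  have hA : 0 < 4 * kp - ku ^ 2 * a := by nlinarith [mul_pos hku2 (sub_pos.mpr hab)]
  have key : (ku * a) ^ 2 * (4 * kp - ku ^ 2 * a) < (ku * b) ^ 2 * (4 * kp - ku ^ 2 * b) := by
    have h1 : ku ^ 2 * b * b ≤ 2 * kp * b := mul_le_mul_of_nonneg_right hb hb0.le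
    have h2 : ku ^ 2 * b * a ≤ 2 * kp * a := mul_le_mul_of_nonneg_right hb ha.le
    have h3 : ku ^ 2 * a * a ≤ ku ^ 2 * b * a := by nlinarith [mul_pos hku2 ha]
    have hfac : 0 < 4 * kp * (a + b) - ku ^ 2 * (a ^ 2 + a * b + b ^ 2) := by nlinarith
    nlinarith [mul_pos (mul_pos hku2 (sub_pos.mpr hab)) hfac]
  have ea : ku * a * Real.sqrt (4 * kp - ku ^ 2 * a)
      = Real.sqrt ((ku * a) ^ 2 * (4 * kp - ku ^ 2 * a)) := by
    rw [Real.sqrt_mul (sq_nonneg _), Real.sqrt_sq (mul_pos hku ha).le]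
  have eb : ku * b * Real.sqrt (4 * kp - ku ^ 2 * b)
      = Real.sqrt ((ku * b) ^ 2 * (4 * kp - ku ^ 2 * b)) := by
    rw [Real.sqrt_mul (sq_nonneg _), Real.sqrt_sq (mul_pos hku hb0).le]
  have hda : 0 < ku * a * Real.sqrt (4 * kp - ku ^ 2 * a) :=
    mul_pos (mul_pos hku ha) (Real.sqrt_pos.mpr hA)
  have hlt : ku * a * Real.sqrt (4 * kp - ku ^ 2 * a)
      < ku * b * Real.sqrt (4 * kp - ku ^ 2 * b) := by
    rw [ea, eb]
    exact Real.sqrt_lt_sqrt (by positivity) key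
  exact div_lt_div_of_pos_left two_pos hda hlt

lemma branch2_lt (kp : ℝ) (hkp : 0 < kp) {a b : ℝ} (ha : 0 < a) (hab : a < b) :
    1 / (kp * Real.sqrt b) < 1 / (kp * Real.sqrt a) := by
  have hsa : 0 < Real.sqrt a := Real.sqrt_pos.mpr ha
  have hlt : kp * Real.sqrt a < kp * Real.sqrt b :=
    mul_lt_mul_of_pos_left (Real.sqrt_lt_sqrt ha.le hab) hkp
  exact div_lt_div_of_pos_left one_pos (mul_pos hkp hsa) hlt

lemma eq_at_threshold (kp ku : ℝ) (hkp : 0 < kp) (hku : 0 < ku) :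
    2 / (ku * (2 * kp / ku ^ 2) * Real.sqrt (4 * kp - ku ^ 2 * (2 * kp / ku ^ 2)))
      = 1 / (kp * Real.sqrt (2 * kp / ku ^ 2)) := by
  have hku2 : (ku : ℝ) ^ 2 ≠ 0 := by positivity
  have h1 : 4 * kp - ku ^ 2 * (2 * kp / ku ^ 2) = 2 * kp := by field_simp; ring
  have h2 : Real.sqrt (2 * kp / ku ^ 2) = Real.sqrt (2 * kp) / ku := by
    rw [Real.sqrt_div (by positivity), Real.sqrt_sq hku.le]
  have hs : 0 < Real.sqrt (2 * kp) := Real.sqrt_pos.mpr (by positivity)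
  rw [h1, h2]
  field_simp

/-- `λ ↦ H(λ)` is monotonically decreasing on `(0, ∞)`; hence the system H∞ norm is
attained at the smallest positive Laplacian eigenvalue `λ₂`. -/
theorem stmt_16 (kp ku : ℝ) (hkp : 0 < kp) (hku : 0 < ku) :
    ∀ a b : ℝ, 0 < a → a < b → Hinf kp ku b < Hinf kp ku a := by
  intro a b ha hab
  have hb0 : 0 < b := ha.trans hab
  have h2kp : (0:ℝ) < 2 * kp := by positivity
  have hku2 : (0:ℝ) < ku ^ 2 := pow_pos hku 2
  unfold Hinf
  by_cases hca : ku ^ 2 * a / (2 * kp) ≤ 1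
  · have ha' : ku ^ 2 * a ≤ 2 * kp := (div_le_one h2kp).mp hca
    by_cases hcb : ku ^ 2 * b / (2 * kp) ≤ 1
    · have hb' : ku ^ 2 * b ≤ 2 * kp := (div_le_one h2kp).mp hcb
      simp only [hca, hcb, if_true]
      exact branch1_lt kp ku hkp hku ha hab hb'
    · -- a in first regime, b in second
      have hb' : 2 * kp < ku ^ 2 * b := by
        by_contra h
        exact hcb ((div_le_one h2kp).mpr (not_lt.mp h))
      simp only [hca, hcb, if_true, if_false]
      set L : ℝ := 2 * kp / ku ^ 2 with hL
      have hL0 : 0 < L := by positivity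
      have hLb : L < b := by
        rw [hL, div_lt_iff₀ hku2]
        linarith [hb']
      have haL : a ≤ L := by
        rw [hL, le_div_iff₀ hku2]
        linarith [ha']
      have step1 : 1 / (kp * Real.sqrt b) < 1 / (kp * Real.sqrt L) :=
        branch2_lt kp hkp hL0 hLb
      have step2 : 1 / (kp * Real.sqrt L)
          = 2 / (ku * L * Real.sqrt (4 * kp - ku ^ 2 * L)) :=
        (eq_at_threshold kp ku hkp hku).symm
      have hLker : ku ^ 2 * L ≤ 2 * kp := by
        rw [hL]; field_simp; exact le_rfl
      have step3 : 2 / (ku * L * Real.sqrt (4 * kp - ku ^ 2 * L))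
          ≤ 2 / (ku * a * Real.sqrt (4 * kp - ku ^ 2 * a)) := by
        rcases eq_or_lt_of_le haL with heq | hlt
        · rw [heq]
        · exact (branch1_lt kp ku hkp hku ha hlt hLker).le
      linarith [step1, step2, step3]
  · have ha' : 2 * kp < ku ^ 2 * a := by
      by_contra h
      exact hca ((div_le_one h2kp).mpr (not_lt.mp h))
    have hcb : ¬ ku ^ 2 * b / (2 * kp) ≤ 1 := by
      intro h
      have : ku ^ 2 * b ≤ 2 * kp := (div_le_one h2kp).mp h
      nlinarith [mul_pos hku2 (sub_pos.mpr hab)]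
    simp only [hca, hcb, if_false]
    exact branch2_lt kp hkp ha hab
end

section
/- For any connected graph G on n vertices with maximum degree d_max, the isoperimetric constant and algebraic connectivity satisfy i(G)²/(2 d_max) ≤ λ_2(L) ≤ 2 i(G). -/
open Matrix in
/-- The algebraic connectivity `λ₂(L)`: by Courant–Fischer it is the infimum of the
Rayleigh quotient `xᵀ L x / xᵀ x` over nonzero vectors `x` orthogonal to the all-ones vector. -/
noncomputable def lambda2 {V : Type} [Fintype V] [DecidableEq V] (G : SimpleGraph V)
    [DecidableRel G.Adj] : ℝ :=
  sInf { r : ℝ | ∃ x : V → ℝ, x ≠ 0 ∧ (∑ v, x v) = 0 ∧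
    r = (x ⬝ᵥ (G.lapMatrix ℝ *ᵥ x)) / (x ⬝ᵥ x) }

namespace CheegerAux

set_option linter.unusedSectionVars false

open Finset Matrix

variable {V : Type} [Fintype V] [DecidableEq V] (G : SimpleGraph V) [DecidableRel G.Adj]

/-- double sum over adjacent ordered pairs -/
noncomputable def Q (f : V → V → ℝ) : ℝ := ∑ u, ∑ v, if G.Adj u v then f u v else 0

lemma Q_nonneg {f : V → V → ℝ} (hf : ∀ u v, 0 ≤ f u v) : 0 ≤ Q G f := by
  refine Finset.sum_nonneg fun u _ => Finset.sum_nonneg fun v _ => ?_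
  split <;> [exact hf u v; exact le_refl 0]

lemma Q_mono {f g : V → V → ℝ} (h : ∀ u v, G.Adj u v → f u v ≤ g u v) : Q G f ≤ Q G g := by
  refine Finset.sum_le_sum fun u _ => Finset.sum_le_sum fun v _ => ?_
  split
  · next hadj => exact h u v hadj
  · exact le_refl 0

lemma quad_eq (x : V → ℝ) :
    x ⬝ᵥ (G.lapMatrix ℝ *ᵥ x) = Q G (fun u v => (x u - x v) ^ 2) / 2 := by
  rw [← Matrix.toLinearMap₂'_apply', SimpleGraph.lapMatrix_toLinearMap₂']; rfl

lemma quad_nonneg (x : V → ℝ) : 0 ≤ x ⬝ᵥ (G.lapMatrix ℝ *ᵥ x) := by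
  rw [quad_eq]
  exact div_nonneg (Q_nonneg G fun u v => sq_nonneg _) (by norm_num)

lemma dot_self_eq (x : V → ℝ) : x ⬝ᵥ x = ∑ v, x v ^ 2 := by
  simp [dotProduct, sq]

lemma dot_self_nonneg (x : V → ℝ) : 0 ≤ x ⬝ᵥ x := by
  rw [dot_self_eq]; exact Finset.sum_nonneg fun v _ => sq_nonneg _

lemma dot_self_pos {x : V → ℝ} (hx : x ≠ 0) : 0 < x ⬝ᵥ x := by
  rw [dot_self_eq]
  obtain ⟨v, hv⟩ := Function.ne_iff.mp hx
  exact Finset.sum_pos' (fun v _ => sq_nonneg _) ⟨v, Finset.mem_univ v, pow_two_pos_of_ne_zero hv⟩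

/-- ordered-pair count of the boundary -/
lemma card_edgeBoundary (S : Finset V) :
    (edgeBoundary G S).card
      = ((univ ×ˢ univ).filter (fun p : V × V => G.Adj p.1 p.2 ∧ p.1 ∈ S ∧ p.2 ∉ S)).card := by
  refine (Finset.card_bij (fun p _ => s(p.1, p.2)) ?_ ?_ ?_).symm
  · rintro ⟨u, v⟩ hp
    simp only [Finset.mem_filter, Finset.mem_product] at hp
    obtain ⟨-, hadj, hu, hv⟩ := hp
    simp only [edgeBoundary, Finset.mem_filter, SimpleGraph.mem_edgeFinset,
      SimpleGraph.mem_edgeSet]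
    exact ⟨hadj, u, hu, v, hv, rfl⟩
  · rintro ⟨u, v⟩ hp ⟨u', v'⟩ hp' h
    simp only [Finset.mem_filter, Finset.mem_product] at hp hp'
    obtain ⟨-, -, hu, hv⟩ := hp
    obtain ⟨-, -, hu', hv'⟩ := hp'
    rw [Sym2.eq_iff] at h
    rcases h with ⟨rfl, rfl⟩ | ⟨rfl, rfl⟩
    · rfl
    · exact absurd hu' hv
  · intro e he
    simp only [edgeBoundary, Finset.mem_filter, SimpleGraph.mem_edgeFinset,
      SimpleGraph.mem_edgeSet] at he
    obtain ⟨hadj, u, hu, v, hv, rfl⟩ := he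
    rw [SimpleGraph.mem_edgeSet] at hadj
    exact ⟨⟨u, v⟩, by simp [Finset.mem_filter, hadj, hu, hv], rfl⟩

lemma sum_ite_pair (S : Finset V) (c : ℝ) :
    (∑ u, ∑ v, if G.Adj u v ∧ u ∈ S ∧ v ∉ S then c else 0)
      = c * (edgeBoundary G S).card := by
  rw [card_edgeBoundary, ← Finset.sum_product']
  rw [Finset.sum_ite, Finset.sum_const, Finset.sum_const_zero, add_zero, nsmul_eq_mul, mul_comm]

lemma sum_ite_pair' (S : Finset V) (c : ℝ) :
    (∑ u, ∑ v, if G.Adj u v ∧ v ∈ S ∧ u ∉ S then c else 0)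
      = c * (edgeBoundary G S).card := by
  rw [Finset.sum_comm, ← sum_ite_pair G S c]
  refine Finset.sum_congr rfl fun u _ => Finset.sum_congr rfl fun v _ => ?_
  congr 1
  simp only [eq_iff_iff]
  constructor
  · rintro ⟨h, h1, h2⟩; exact ⟨h.symm, h1, h2⟩
  · rintro ⟨h, h1, h2⟩; exact ⟨h.symm, h1, h2⟩

section Iso

variable {G}

lemma isoSet_nonempty (hV : 1 < Fintype.card V) :
    { r : ℝ | ∃ S : Finset V, S.Nonempty ∧ 2 * S.card ≤ Fintype.card V ∧
      r = (edgeBoundary G S).card / S.card }.Nonempty := by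
  obtain ⟨v⟩ := Fintype.card_pos_iff.mp (by omega : 0 < Fintype.card V)
  exact ⟨_, {v}, Finset.singleton_nonempty v, by simp only [Finset.card_singleton]; omega, rfl⟩

lemma isoSet_bddBelow :
    BddBelow { r : ℝ | ∃ S : Finset V, S.Nonempty ∧ 2 * S.card ≤ Fintype.card V ∧
      r = (edgeBoundary G S).card / S.card } := by
  refine ⟨0, fun r hr => ?_⟩
  obtain ⟨S, -, -, rfl⟩ := hr
  positivity

lemma isoConst_nonneg (hV : 1 < Fintype.card V) : 0 ≤ isoConst G := by
  refine le_csInf (isoSet_nonempty hV) fun r hr => ?_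
  obtain ⟨S, -, -, rfl⟩ := hr
  positivity

lemma isoConst_le {S : Finset V} (hS : S.Nonempty) (hS2 : 2 * S.card ≤ Fintype.card V) :
    isoConst G ≤ (edgeBoundary G S).card / S.card := by
  exact csInf_le isoSet_bddBelow ⟨S, hS, hS2, rfl⟩

lemma isoConst_mul_card_le {S : Finset V} (hS : S.Nonempty) (hS2 : 2 * S.card ≤ Fintype.card V) :
    isoConst G * S.card ≤ (edgeBoundary G S).card := by
  have hpos : (0 : ℝ) < S.card := by exact_mod_cast hS.card_pos
  have := isoConst_le (G := G) hS hS2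
  calc isoConst G * S.card ≤ ((edgeBoundary G S).card / S.card) * S.card :=
        mul_le_mul_of_nonneg_right this hpos.le
    _ = (edgeBoundary G S).card := div_mul_cancel₀ _ hpos.ne'

end Iso

/-- Coarea / level-set inequality. -/
lemma coarea (hV : 1 < Fintype.card V) (g : V → ℝ) (hg : ∀ v, 0 ≤ g v)
    (hsupp : 2 * (univ.filter (fun v => g v ≠ 0)).card ≤ Fintype.card V) :
    2 * isoConst G * ∑ v, g v ≤ Q G (fun u v => |g u - g v|) := by
  suffices H : ∀ k : ℕ, ∀ g : V → ℝ, (∀ v, 0 ≤ g v) →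
      2 * (univ.filter (fun v => g v ≠ 0)).card ≤ Fintype.card V →
      (univ.filter (fun v => g v ≠ 0)).card = k →
      2 * isoConst G * ∑ v, g v ≤ Q G (fun u v => |g u - g v|) by
    exact H _ g hg hsupp rfl
  intro k
  induction k using Nat.strong_induction_on with
  | _ k IH =>
  intro g hg hsupp hk
  set T := univ.filter (fun v => g v ≠ 0) with hT
  have hmemT : ∀ v, v ∈ T ↔ g v ≠ 0 := fun v => by simp [hT]
  by_cases hTe : T = ∅
  · have hg0 : ∀ v, g v = 0 := by
      intro v
      by_contra hv
      exact (Finset.eq_empty_iff_forall_notMem.mp hTe v) ((hmemT v).mpr hv)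
    have hz : ∑ v, g v = 0 := Finset.sum_eq_zero fun v _ => hg0 v
    rw [hz, mul_zero]
    exact Q_nonneg G fun u v => abs_nonneg _
  · have hTne : T.Nonempty := Finset.nonempty_of_ne_empty hTe
    obtain ⟨w, hwT, hwmin⟩ := Finset.exists_min_image T g hTne
    set m := g w with hm
    have hmpos : 0 < m := lt_of_le_of_ne (hg w) (Ne.symm ((hmemT w).mp hwT))
    have hmle : ∀ v ∈ T, m ≤ g v := hwmin
    have h0 : ∀ z, z ∉ T → g z = 0 := by
      intro z hz
      by_contra hc
      exact hz ((hmemT z).mpr hc)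
    set g' : V → ℝ := fun v => if v ∈ T then g v - m else 0 with hg'
    have hg'0 : ∀ v, 0 ≤ g' v := by
      intro v
      rw [hg']
      dsimp only
      split
      · next h => linarith [hmle v h]
      · exact le_refl 0
    have hgsplit : ∀ v, g v = g' v + if v ∈ T then m else 0 := by
      intro v
      rw [hg']
      dsimp only
      split
      · ring
      · next h => rw [h0 v h]; ring
    have hsub : univ.filter (fun v => g' v ≠ 0) ⊆ T.erase w := by
      intro v hv
      simp only [Finset.mem_filter, Finset.mem_univ, true_and] at hv
      rw [hg'] at hv
      dsimp only at hv
      rw [Finset.mem_erase]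
      by_cases hvT : v ∈ T
      · refine ⟨?_, hvT⟩
        rintro rfl
        exact hv (by rw [if_pos hvT]; rw [hm]; ring)
      · rw [if_neg hvT] at hv
        exact absurd rfl hv
    have hcard' : (univ.filter (fun v => g' v ≠ 0)).card < k := by
      calc (univ.filter (fun v => g' v ≠ 0)).card ≤ (T.erase w).card :=
            Finset.card_le_card hsub
        _ < T.card := Finset.card_erase_lt_of_mem hwT
        _ = k := hk
    have hsupp' : 2 * (univ.filter (fun v => g' v ≠ 0)).card ≤ Fintype.card V := by
      have : (univ.filter (fun v => g' v ≠ 0)).card ≤ T.card :=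
        le_of_lt (lt_of_le_of_lt (Finset.card_le_card hsub) (Finset.card_erase_lt_of_mem hwT))
      omega
    have IH' := IH _ hcard' g' hg'0 hsupp' rfl
    have hkey : ∀ u v, |g u - g v| = |g' u - g' v|
        + ((if u ∈ T ∧ v ∉ T then m else 0) + (if v ∈ T ∧ u ∉ T then m else 0)) := by
      intro u v
      by_cases hu : u ∈ T <;> by_cases hv : v ∈ T
      · rw [if_neg (by tauto), if_neg (by tauto), hg']
        dsimp only
        rw [if_pos hu, if_pos hv]
        rw [show g u - m - (g v - m) = g u - g v by ring]
        ring
      · rw [if_pos ⟨hu, hv⟩, if_neg (by tauto), hg']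
        dsimp only
        rw [if_pos hu, if_neg hv, h0 v hv, sub_zero, sub_zero,
          abs_of_nonneg (hg u), abs_of_nonneg (by linarith [hmle u hu])]
        ring
      · rw [if_neg (by tauto), if_pos ⟨hv, hu⟩, hg']
        dsimp only
        rw [if_neg hu, if_pos hv, h0 u hu, zero_sub, zero_sub, abs_neg, abs_neg,
          abs_of_nonneg (hg v), abs_of_nonneg (by linarith [hmle v hv])]
        ring
      · rw [if_neg (by tauto), if_neg (by tauto), hg']
        dsimp only
        rw [if_neg hu, if_neg hv, h0 u hu, h0 v hv]
        norm_num
    have hQed : Q G (fun u v => |g u - g v|) = Q G (fun u v => |g' u - g' v|)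
        + (m * (edgeBoundary G T).card + m * (edgeBoundary G T).card) := by
      have step : Q G (fun u v => |g u - g v|) = Q G (fun u v => |g' u - g' v|)
          + ((∑ u, ∑ v, if G.Adj u v ∧ u ∈ T ∧ v ∉ T then m else 0)
            + (∑ u, ∑ v, if G.Adj u v ∧ v ∈ T ∧ u ∉ T then m else 0)) := by
        unfold Q
        simp_rw [← Finset.sum_add_distrib]
        refine Finset.sum_congr rfl fun u _ => Finset.sum_congr rfl fun v _ => ?_
        by_cases hadj : G.Adj u v
        · simp only [hadj, if_true, true_and]
          exact hkey u v
        · simp [hadj]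
      rw [step, sum_ite_pair G T m, sum_ite_pair' G T m]
    have hsum : ∑ v, g v = ∑ v, g' v + m * T.card := by
      rw [Finset.sum_congr rfl fun v _ => hgsplit v, Finset.sum_add_distrib]
      congr 1
      rw [Finset.sum_ite_mem, Finset.univ_inter, Finset.sum_const, nsmul_eq_mul, mul_comm]
    have hTb : isoConst G * T.card ≤ (edgeBoundary G T).card := by
      refine isoConst_mul_card_le (G := G) hTne ?_
      exact hsupp
    calc 2 * isoConst G * ∑ v, g v
        = 2 * isoConst G * ∑ v, g' v + 2 * (isoConst G * T.card) * m := by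
          rw [hsum]; ring
      _ ≤ Q G (fun u v => |g' u - g' v|)
          + (m * (edgeBoundary G T).card + m * (edgeBoundary G T).card) := by
          have h2 : 2 * (isoConst G * (T.card : ℝ)) * m
              ≤ 2 * ((edgeBoundary G T).card : ℝ) * m := by
            apply mul_le_mul_of_nonneg_right _ hmpos.le
            linarith
          linarith
      _ = Q G (fun u v => |g u - g v|) := hQed.symm

lemma Q_add (f f' : V → V → ℝ) :
    Q G f + Q G f' = Q G (fun u v => f u v + f' u v) := by
  unfold Q
  simp_rw [← Finset.sum_add_distrib]
  refine Finset.sum_congr rfl fun u _ => Finset.sum_congr rfl fun v _ => ?_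
  split <;> simp

lemma Q_left (f : V → ℝ) : Q G (fun u v => f u) = ∑ u, (G.degree u : ℝ) * f u := by
  unfold Q
  refine Finset.sum_congr rfl fun u _ => ?_
  rw [SimpleGraph.degree_eq_sum_if_adj, Finset.sum_mul]
  exact Finset.sum_congr rfl fun v _ => by split <;> simp

lemma Q_right (f : V → ℝ) : Q G (fun u v => f v) = ∑ u, (G.degree u : ℝ) * f u := by
  rw [← Q_left G f]
  unfold Q
  rw [Finset.sum_comm]
  refine Finset.sum_congr rfl fun u _ => Finset.sum_congr rfl fun v _ => ?_
  exact if_congr (G.adj_comm v u) rfl rfl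

/-- Key discrete Cheeger bound for nonnegative vectors of small support. -/
lemma key_bound (hV : 1 < Fintype.card V) (y : V → ℝ) (hy : ∀ v, 0 ≤ y v)
    (hsupp : 2 * (univ.filter (fun v => y v ≠ 0)).card ≤ Fintype.card V) :
    isoConst G ^ 2 * (∑ v, y v ^ 2) ≤ (G.maxDegree : ℝ) * Q G (fun u v => (y u - y v) ^ 2) := by
  set h := isoConst G with hh'
  have hh : 0 ≤ h := isoConst_nonneg hV
  set d : ℝ := (G.maxDegree : ℝ) with hd'
  have hd0 : 0 ≤ d := Nat.cast_nonneg _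
  set Sy : ℝ := ∑ v, y v ^ 2 with hSy
  have hSy0 : 0 ≤ Sy := Finset.sum_nonneg fun v _ => sq_nonneg _
  set QA : ℝ := Q G (fun u v => (y u - y v) ^ 2) with hQA
  have hQA0 : 0 ≤ QA := Q_nonneg G fun u v => sq_nonneg _
  set A : ℝ := Q G (fun u v => |y u ^ 2 - y v ^ 2|) with hA
  -- coarea applied to y^2
  have hco : 2 * h * Sy ≤ A := by
    have heq : (univ.filter (fun v => y v ^ 2 ≠ 0)) = (univ.filter (fun v => y v ≠ 0)) := by
      refine Finset.filter_congr fun v _ => by simp [pow_eq_zero_iff]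
    have := coarea (G := G) hV (fun v => y v ^ 2) (fun v => sq_nonneg _)
      (by rw [heq]; exact hsupp)
    simpa using this
  -- Cauchy–Schwarz
  set QB : ℝ := Q G (fun u v => (y u + y v) ^ 2) with hQB
  have hCS : A ^ 2 ≤ QA * QB := by
    have := Finset.sum_mul_sq_le_sq_mul_sq (univ ×ˢ univ)
      (fun p : V × V => if G.Adj p.1 p.2 then |y p.1 - y p.2| else 0)
      (fun p : V × V => if G.Adj p.1 p.2 then y p.1 + y p.2 else 0)
    have e1 : (∑ p ∈ univ ×ˢ univ,
        (if G.Adj p.1 p.2 then |y p.1 - y p.2| else 0)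
          * (if G.Adj p.1 p.2 then y p.1 + y p.2 else 0)) = A := by
      rw [hA]
      unfold Q
      rw [← Finset.sum_product']
      refine Finset.sum_congr rfl fun p _ => ?_
      split
      · rw [← abs_of_nonneg (add_nonneg (hy p.1) (hy p.2)), ← abs_mul]
        congr 1
        ring
      · ring
    have e2 : (∑ p ∈ univ ×ˢ univ,
        (if G.Adj p.1 p.2 then |y p.1 - y p.2| else 0) ^ 2) = QA := by
      rw [hQA]
      unfold Q
      rw [← Finset.sum_product']
      refine Finset.sum_congr rfl fun p _ => ?_
      split
      · rw [sq_abs]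
      · ring
    have e3 : (∑ p ∈ univ ×ˢ univ,
        (if G.Adj p.1 p.2 then y p.1 + y p.2 else 0) ^ 2) = QB := by
      rw [hQB]
      unfold Q
      rw [← Finset.sum_product']
      refine Finset.sum_congr rfl fun p _ => ?_
      split
      · rfl
      · ring
    rw [e1, e2, e3] at this
    exact this
  -- degree bound
  have hQB4 : QB ≤ 4 * d * Sy := by
    have step1 : QB ≤ Q G (fun u v => 2 * y u ^ 2 + 2 * y v ^ 2) :=
      Q_mono G fun u v _ => by nlinarith [sq_nonneg (y u - y v)]
    have step2 : Q G (fun u v => 2 * y u ^ 2 + 2 * y v ^ 2)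
        = Q G (fun u v => 2 * y u ^ 2) + Q G (fun u v => 2 * y v ^ 2) :=
      (Q_add G _ _).symm
    have step3 : Q G (fun u v => 2 * y u ^ 2) = ∑ u, (G.degree u : ℝ) * (2 * y u ^ 2) :=
      Q_left G _
    have step4 : Q G (fun u v => 2 * y v ^ 2) = ∑ u, (G.degree u : ℝ) * (2 * y u ^ 2) :=
      Q_right G _
    have step5 : ∑ u, (G.degree u : ℝ) * (2 * y u ^ 2) ≤ ∑ u, d * (2 * y u ^ 2) := by
      refine Finset.sum_le_sum fun u _ => ?_
      have : (G.degree u : ℝ) ≤ d := by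
        rw [hd']
        exact_mod_cast G.degree_le_maxDegree u
      nlinarith [sq_nonneg (y u)]
    have step6 : ∑ u, d * (2 * y u ^ 2) = 2 * d * Sy := by
      rw [hSy, Finset.mul_sum]
      refine Finset.sum_congr rfl fun u _ => by ring
    linarith
  -- combine
  have hA0 : 0 ≤ A := Q_nonneg G fun u v => abs_nonneg _
  have hmain : (h ^ 2 * Sy) * Sy ≤ (d * QA) * Sy := by
    have s1 : (2 * h * Sy) ^ 2 ≤ A ^ 2 := by
      have : 0 ≤ 2 * h * Sy := by positivity
      exact pow_le_pow_left₀ this hco 2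
    have s2 : QA * QB ≤ QA * (4 * d * Sy) := mul_le_mul_of_nonneg_left hQB4 hQA0
    nlinarith
  rcases eq_or_lt_of_le hSy0 with hSyz | hSyp
  · rw [← hSyz, mul_zero]
    positivity
  · exact le_of_mul_le_mul_right hmain hSyp

lemma exists_median [Nonempty V] (x : V → ℝ) :
    ∃ c : ℝ, 2 * (univ.filter (fun v => c < x v)).card ≤ Fintype.card V ∧
      2 * (univ.filter (fun v => x v < c)).card ≤ Fintype.card V := by
  classical
  set n := Fintype.card V with hn
  set A := univ.image x with hA
  have hAne : A.Nonempty := ⟨x (Classical.arbitrary V), Finset.mem_image_of_mem x (mem_univ _)⟩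
  set B := A.filter (fun t => n ≤ 2 * (univ.filter (fun v => x v ≤ t)).card) with hB
  have hBne : B.Nonempty := by
    refine ⟨A.max' hAne, Finset.mem_filter.mpr ⟨A.max'_mem hAne, ?_⟩⟩
    have hall : univ.filter (fun v => x v ≤ A.max' hAne) = univ :=
      Finset.filter_true_of_mem fun v _ =>
        Finset.le_max' A _ (Finset.mem_image_of_mem x (mem_univ v))
    rw [hall, Finset.card_univ, ← hn]
    omega
  set c := B.min' hBne with hc
  have hcB : c ∈ B := B.min'_mem hBne
  have hcle : n ≤ 2 * (univ.filter (fun v => x v ≤ c)).card := (Finset.mem_filter.mp hcB).2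
  refine ⟨c, ?_, ?_⟩
  · have hsplit : (univ.filter (fun v => x v ≤ c)).card
        + (univ.filter (fun v => ¬ x v ≤ c)).card = n := by
      rw [Finset.card_filter_add_card_filter_not, Finset.card_univ]
    have heq : (univ.filter (fun v => c < x v)) = (univ.filter (fun v => ¬ x v ≤ c)) :=
      Finset.filter_congr fun v _ => not_le.symm
    rw [heq]
    omega
  · by_contra hcon
    push_neg at hcon
    have hlt : 0 < (univ.filter (fun v => x v < c)).card := by omega
    obtain ⟨v0, hv0⟩ := Finset.card_pos.mp hlt
    have hv0' : x v0 < c := (Finset.mem_filter.mp hv0).2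
    set A' := A.filter (fun t => t < c) with hA'
    have hA'ne : A'.Nonempty :=
      ⟨x v0, Finset.mem_filter.mpr ⟨Finset.mem_image_of_mem x (mem_univ v0), hv0'⟩⟩
    set c' := A'.max' hA'ne with hc'
    have hc'A : c' ∈ A' := A'.max'_mem hA'ne
    have hc'lt : c' < c := (Finset.mem_filter.mp hc'A).2
    have hsubs : (univ.filter (fun v => x v < c)) ⊆ (univ.filter (fun v => x v ≤ c')) := by
      intro v hv
      simp only [Finset.mem_filter, Finset.mem_univ, true_and] at hv ⊢
      exact Finset.le_max' A' (x v)
        (Finset.mem_filter.mpr ⟨Finset.mem_image_of_mem x (mem_univ v), hv⟩)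
    have hcard : (univ.filter (fun v => x v < c)).card
        ≤ (univ.filter (fun v => x v ≤ c')).card := Finset.card_le_card hsubs
    have hc'B : c' ∈ B := by
      refine Finset.mem_filter.mpr ⟨(Finset.mem_filter.mp hc'A).1, ?_⟩
      omega
    have := B.min'_le c' hc'B
    rw [← hc] at this
    linarith

lemma rayleigh_lower (hV : 1 < Fintype.card V) (hd : 0 < G.maxDegree) (x : V → ℝ) (hx : x ≠ 0)
    (hsum : (∑ v, x v) = 0) :
    isoConst G ^ 2 / (2 * (G.maxDegree : ℝ)) ≤ (x ⬝ᵥ (G.lapMatrix ℝ *ᵥ x)) / (x ⬝ᵥ x) := by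
  have : Nonempty V := Fintype.card_pos_iff.mp (by omega)
  obtain ⟨c, hc1, hc2⟩ := exists_median x
  set y : V → ℝ := fun v => max (x v - c) 0 with hy
  set z : V → ℝ := fun v => max (c - x v) 0 with hz
  have hy0 : ∀ v, 0 ≤ y v := fun v => le_max_right _ _
  have hz0 : ∀ v, 0 ≤ z v := fun v => le_max_right _ _
  have hyz : ∀ v, y v - z v = x v - c := by
    intro v
    rw [hy, hz]
    dsimp only
    rcases le_total (x v) c with h | h
    · rw [max_eq_right (by linarith), max_eq_left (by linarith)]
      ring
    · rw [max_eq_left (by linarith), max_eq_right (by linarith)]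
      ring
  have hprod : ∀ v, y v * z v = 0 := by
    intro v
    rw [hy, hz]
    dsimp only
    rcases le_total (x v) c with h | h
    · rw [max_eq_right (show x v - c ≤ 0 by linarith), zero_mul]
    · rw [show max (c - x v) 0 = 0 from max_eq_right (by linarith), mul_zero]
  have hysupp : 2 * (univ.filter (fun v => y v ≠ 0)).card ≤ Fintype.card V := by
    have heq : (univ.filter (fun v => y v ≠ 0)) = (univ.filter (fun v => c < x v)) := by
      refine Finset.filter_congr fun v _ => ?_
      rw [hy]
      dsimp only
      constructor
      · intro hne
        by_contra hle
        push_neg at hle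
        exact hne (max_eq_right (by linarith))
      · intro hlt
        rw [max_eq_left (by linarith)]
        intro h0
        linarith
    rw [heq]
    exact hc1
  have hzsupp : 2 * (univ.filter (fun v => z v ≠ 0)).card ≤ Fintype.card V := by
    have heq : (univ.filter (fun v => z v ≠ 0)) = (univ.filter (fun v => x v < c)) := by
      refine Finset.filter_congr fun v _ => ?_
      rw [hz]
      dsimp only
      constructor
      · intro hne
        by_contra hle
        push_neg at hle
        exact hne (max_eq_right (by linarith))
      · intro hlt
        rw [max_eq_left (by linarith)]
        intro h0
        linarith
    rw [heq]
    exact hc2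
  have hkb_y := key_bound G hV y hy0 hysupp
  have hkb_z := key_bound G hV z hz0 hzsupp
  have hQsplit : Q G (fun u v => (y u - y v) ^ 2) + Q G (fun u v => (z u - z v) ^ 2)
      ≤ Q G (fun u v => (x u - x v) ^ 2) := by
    rw [Q_add]
    refine Q_mono G fun u v _ => ?_
    have hxuv : x u - x v = (y u - z u) - (y v - z v) := by
      have h1 := hyz u
      have h2 := hyz v
      linarith
    rw [hxuv]
    nlinarith [mul_nonneg (hy0 u) (hz0 v), mul_nonneg (hy0 v) (hz0 u), hprod u, hprod v]
  have hsq : ∀ v, y v ^ 2 + z v ^ 2 = (x v - c) ^ 2 := by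
    intro v
    have h1 := hyz v
    have h2 := hprod v
    have h3 : (y v - z v) ^ 2 = (x v - c) ^ 2 := by rw [h1]
    linear_combination h3 + 2 * h2
  have hSxyz : ∑ v, x v ^ 2 ≤ (∑ v, y v ^ 2) + (∑ v, z v ^ 2) := by
    have e1 : (∑ v, y v ^ 2) + (∑ v, z v ^ 2) = ∑ v, (x v - c) ^ 2 := by
      rw [← Finset.sum_add_distrib]
      exact Finset.sum_congr rfl fun v _ => hsq v
    have e2 : ∑ v, (x v - c) ^ 2
        = (∑ v, x v ^ 2) - 2 * c * (∑ v, x v) + (Fintype.card V : ℝ) * c ^ 2 := by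
      have : ∀ v : V, (x v - c) ^ 2 = x v ^ 2 - 2 * c * x v + c ^ 2 := fun v => by ring
      rw [Finset.sum_congr rfl fun v _ => this v, Finset.sum_add_distrib,
        Finset.sum_sub_distrib, ← Finset.mul_sum, Finset.sum_const, Finset.card_univ,
        nsmul_eq_mul]
    rw [e1, e2, hsum]
    have : (0:ℝ) ≤ (Fintype.card V : ℝ) * c ^ 2 := by positivity
    linarith
  set d : ℝ := (G.maxDegree : ℝ) with hd'
  have hdpos : 0 < d := by rw [hd']; exact_mod_cast hd
  have hmain : isoConst G ^ 2 * (∑ v, x v ^ 2) ≤ 2 * d * (x ⬝ᵥ (G.lapMatrix ℝ *ᵥ x)) := by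
    have c1 : isoConst G ^ 2 * (∑ v, x v ^ 2)
        ≤ isoConst G ^ 2 * ((∑ v, y v ^ 2) + (∑ v, z v ^ 2)) :=
      mul_le_mul_of_nonneg_left hSxyz (sq_nonneg _)
    have c2 : isoConst G ^ 2 * ((∑ v, y v ^ 2) + (∑ v, z v ^ 2))
        ≤ d * Q G (fun u v => (x u - x v) ^ 2) := by
      have := mul_le_mul_of_nonneg_left hQsplit hdpos.le
      nlinarith
    rw [quad_eq]
    linarith
  have hdot : 0 < x ⬝ᵥ x := dot_self_pos hx
  rw [div_le_div_iff₀ (by positivity) hdot]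
  rw [dot_self_eq] at hdot ⊢
  nlinarith

lemma lambdaSet_bddBelow :
    BddBelow { r : ℝ | ∃ x : V → ℝ, x ≠ 0 ∧ (∑ v, x v) = 0 ∧
      r = (x ⬝ᵥ (G.lapMatrix ℝ *ᵥ x)) / (x ⬝ᵥ x) } := by
  refine ⟨0, fun r hr => ?_⟩
  obtain ⟨x, hx, -, rfl⟩ := hr
  exact div_nonneg (quad_nonneg G x) (dot_self_nonneg x)

lemma lambda2_le {S : Finset V} (hS : S.Nonempty) (hS2 : 2 * S.card ≤ Fintype.card V) :
    lambda2 G ≤ 2 * ((edgeBoundary G S).card / S.card) := by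
  classical
  set n := Fintype.card V with hn
  set a := S.card with ha
  have ha1 : 1 ≤ a := hS.card_pos
  have haub : a ≤ n := by rw [ha, hn, ← Finset.card_univ]; exact Finset.card_le_card (Finset.subset_univ S)
  set b := n - a with hb
  have hab : a + b = n := by omega
  have hb1 : 1 ≤ b := by omega
  set x : V → ℝ := fun v => if v ∈ S then (b : ℝ) else -(a : ℝ) with hx
  have hcards : (univ.filter (fun v => v ∈ S)).card = a := by
    rw [Finset.filter_univ_mem]
  have hcardc : (univ.filter (fun v => ¬ v ∈ S)).card = b := by
    have := Finset.card_filter_add_card_filter_not (s := (univ : Finset V))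
      (p := (fun v => v ∈ S))
    rw [Finset.card_univ, ← hn, hcards] at this
    omega
  have hsum : ∑ v, x v = 0 := by
    rw [hx]
    rw [Finset.sum_ite, Finset.sum_const, Finset.sum_const, hcards, hcardc,
      nsmul_eq_mul, nsmul_eq_mul]
    ring
  have hxne : x ≠ 0 := by
    obtain ⟨v, hv⟩ := hS
    intro h
    have := congrFun h v
    rw [hx] at this
    simp only [if_pos hv, Pi.zero_apply] at this
    have hbne : (b : ℝ) ≠ 0 := by
      have hb' : (0:ℝ) < b := by exact_mod_cast hb1
      exact hb'.ne'
    exact hbne this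
  have hdot : x ⬝ᵥ x = (a : ℝ) * b * n := by
    rw [dot_self_eq]
    have : ∀ v : V, x v ^ 2 = if v ∈ S then (b : ℝ) ^ 2 else (a : ℝ) ^ 2 := by
      intro v
      by_cases hv : v ∈ S
      · rw [hx]; simp only [if_pos hv]
      · rw [hx]; simp only [if_neg hv]; ring
    rw [Finset.sum_congr rfl fun v _ => this v, Finset.sum_ite, Finset.sum_const,
      Finset.sum_const, hcards, hcardc, nsmul_eq_mul, nsmul_eq_mul]
    have hcast : (a : ℝ) + b = n := by exact_mod_cast hab
    linear_combination (a : ℝ) * b * hcast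
  have hquad : x ⬝ᵥ (G.lapMatrix ℝ *ᵥ x) = (n : ℝ) ^ 2 * (edgeBoundary G S).card := by
    rw [quad_eq]
    have hkey : ∀ u v : V, (x u - x v) ^ 2
        = (if u ∈ S ∧ v ∉ S then ((n : ℝ) ^ 2) else 0)
          + (if v ∈ S ∧ u ∉ S then ((n : ℝ) ^ 2) else 0) := by
      intro u v
      have hcast : (a : ℝ) + b = n := by exact_mod_cast hab
      by_cases hu : u ∈ S <;> by_cases hv : v ∈ S
      · rw [hx, if_neg (by tauto), if_neg (by tauto)]
        simp only [if_pos hu, if_pos hv]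
        ring
      · rw [hx, if_pos ⟨hu, hv⟩, if_neg (by tauto)]
        simp only [if_pos hu, if_neg hv]
        nlinarith [hcast]
      · rw [hx, if_neg (by tauto), if_pos ⟨hv, hu⟩]
        simp only [if_neg hu, if_pos hv]
        nlinarith [hcast]
      · rw [hx, if_neg (by tauto), if_neg (by tauto)]
        simp only [if_neg hu, if_neg hv]
        ring
    have step : Q G (fun u v => (x u - x v) ^ 2)
        = (∑ u, ∑ v, if G.Adj u v ∧ u ∈ S ∧ v ∉ S then ((n:ℝ)^2) else 0)
          + (∑ u, ∑ v, if G.Adj u v ∧ v ∈ S ∧ u ∉ S then ((n:ℝ)^2) else 0) := by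
      unfold Q
      simp_rw [← Finset.sum_add_distrib]
      refine Finset.sum_congr rfl fun u _ => Finset.sum_congr rfl fun v _ => ?_
      by_cases hadj : G.Adj u v
      · simp only [hadj, if_true, true_and]
        exact hkey u v
      · simp [hadj]
    rw [step, sum_ite_pair, sum_ite_pair']
    ring
  have hR : lambda2 G ≤ (x ⬝ᵥ (G.lapMatrix ℝ *ᵥ x)) / (x ⬝ᵥ x) :=
    csInf_le (lambdaSet_bddBelow G) ⟨x, hxne, hsum, rfl⟩
  have hE0 : (0:ℝ) ≤ (edgeBoundary G S).card := Nat.cast_nonneg _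
  have hapos : (0:ℝ) < a := by exact_mod_cast ha1
  have hbpos : (0:ℝ) < b := by exact_mod_cast hb1
  have hnpos : (0:ℝ) < n := by exact_mod_cast (by omega : 0 < n)
  have hfinal : ((n : ℝ) ^ 2 * (edgeBoundary G S).card) / ((a:ℝ) * b * n)
      ≤ 2 * ((edgeBoundary G S).card / a) := by
    rw [← mul_div_assoc, div_le_div_iff₀ (mul_pos (mul_pos hapos hbpos) hnpos) hapos]
    have hn2b : (n : ℝ) ≤ 2 * b := by
      have h0 : 2 * a ≤ n := hS2
      have h1 : (2 * a : ℝ) ≤ n := by exact_mod_cast h0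
      have h2 : (a : ℝ) + b = n := by exact_mod_cast hab
      linarith
    nlinarith [mul_nonneg (mul_nonneg (mul_nonneg hapos.le hE0) hnpos.le)
      (sub_nonneg.mpr hn2b)]
  calc lambda2 G ≤ (x ⬝ᵥ (G.lapMatrix ℝ *ᵥ x)) / (x ⬝ᵥ x) := hR
    _ = ((n : ℝ) ^ 2 * (edgeBoundary G S).card) / ((a:ℝ) * b * n) := by rw [hquad, hdot]
    _ ≤ 2 * ((edgeBoundary G S).card / a) := hfinal

end CheegerAux

open CheegerAux Finset Matrix in
/-- Cheeger inequality: for a connected graph with maximum degree `d_max`,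
`i(G)²/(2 d_max) ≤ λ₂(L) ≤ 2 i(G)`. -/
theorem stmt_18 {V : Type} [Fintype V] [DecidableEq V]
    (G : SimpleGraph V) [DecidableRel G.Adj] (hG : G.Connected)
    (hV : 1 < Fintype.card V) :
    isoConst G ^ 2 / (2 * (G.maxDegree : ℝ)) ≤ lambda2 G ∧
    lambda2 G ≤ 2 * isoConst G := by
  classical
  obtain ⟨u, v, huv⟩ := Fintype.exists_pair_of_one_lt_card hV
  have hd : 0 < G.maxDegree := by
    obtain ⟨w⟩ := hG.preconnected u v
    have hadj : ∃ w', G.Adj u w' := by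
      cases w with
      | nil => exact absurd rfl huv
      | cons h p => exact ⟨_, h⟩
    calc 0 < G.degree u := (SimpleGraph.degree_pos_iff_exists_adj G u).mpr hadj
      _ ≤ G.maxDegree := G.degree_le_maxDegree u
  -- a witness vector with zero sum
  set x0 : V → ℝ := fun w => (if w = u then (1:ℝ) else 0) + (if w = v then (-1:ℝ) else 0)
    with hx0
  have hx0sum : ∑ w, x0 w = 0 := by
    rw [hx0]
    rw [Finset.sum_add_distrib, Finset.sum_ite_eq' Finset.univ u (fun _ => (1:ℝ)),
      Finset.sum_ite_eq' Finset.univ v (fun _ => (-1:ℝ))]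
    simp
  have hx0ne : x0 ≠ 0 := by
    intro h
    have h1 := congrFun h u
    rw [hx0] at h1
    simp only [if_pos rfl, if_neg huv, if_true, add_zero, Pi.zero_apply] at h1
    norm_num at h1
  have hlne : { r : ℝ | ∃ x : V → ℝ, x ≠ 0 ∧ (∑ w, x w) = 0 ∧
      r = (x ⬝ᵥ (G.lapMatrix ℝ *ᵥ x)) / (x ⬝ᵥ x) }.Nonempty :=
    ⟨_, ⟨x0, hx0ne, hx0sum, rfl⟩⟩
  constructor
  · refine le_csInf hlne ?_
    rintro r ⟨x, hx, hsum, rfl⟩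
    exact rayleigh_lower G hV hd x hx hsum
  · have h2 : lambda2 G / 2 ≤ isoConst G := by
      refine le_csInf (isoSet_nonempty hV) ?_
      rintro r ⟨S, hS, hS2, rfl⟩
      linarith [lambda2_le (G := G) hS hS2]
    linarith
end

section
/- For n > k ≥ 1 and any vertices i, j in P(n,k) with i < j, there exist k vertex-disjoint paths from i to j in P(n,k). -/
lemma platoon_adj {n k : ℕ} (a b : ℕ) (ha : a < n) (hb : b < n)
    (hne : a ≠ b) (hd : a - b ≤ k ∧ b - a ≤ k) :
    (platoon n k).Adj ⟨a, ha⟩ ⟨b, hb⟩ := by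
  refine ⟨by simp [Fin.ext_iff]; omega, ?_⟩
  rw [show ((⟨a, ha⟩ : Fin n) : ℤ) = (a : ℤ) by simp,
      show ((⟨b, hb⟩ : Fin n) : ℤ) = (b : ℤ) by simp]
  omega

def ladder (n k : ℕ) (hk : 1 ≤ k) (j : ℕ) (hj : j < n) :
    (a : ℕ) → (ha : a ≤ j) → (platoon n k).Walk ⟨a, by omega⟩ ⟨j, hj⟩ := fun a ha =>
  if h : a = j then by subst h; exact SimpleGraph.Walk.nil
  else if h2 : j ≤ a + k then
    SimpleGraph.Walk.cons (platoon_adj a j (by omega) hj (by omega) (by omega))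
      SimpleGraph.Walk.nil
  else
    SimpleGraph.Walk.cons
      (platoon_adj a (a + k) (by omega) (by omega) (by omega) (by omega))
      (ladder n k hk j hj (a + k) (by omega))
termination_by a ha => j - a

lemma ladder_support (n k : ℕ) (hk : 1 ≤ k) (j : ℕ) (hj : j < n) (a : ℕ) (ha : a ≤ j)
    (v : Fin n) (hv : v ∈ (ladder n k hk j hj a ha).support) :
    a ≤ v.1 ∧ v.1 ≤ j ∧ (v.1 = j ∨ ∃ m, v.1 = a + m * k) := by
  rw [ladder] at hv
  split_ifs at hv with h h2
  · subst h
    simp at hv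
    subst hv
    exact ⟨le_rfl, le_rfl, Or.inl rfl⟩
  · simp [SimpleGraph.Walk.support_cons] at hv
    rcases hv with rfl | rfl
    · exact ⟨le_rfl, ha, Or.inr ⟨0, by simp⟩⟩
    · exact ⟨ha, le_rfl, Or.inl rfl⟩
  · rw [SimpleGraph.Walk.support_cons] at hv
    rcases List.mem_cons.mp hv with rfl | hv'
    · exact ⟨le_rfl, ha, Or.inr ⟨0, by simp⟩⟩
    · obtain ⟨h1, h2', h3⟩ := ladder_support n k hk j hj (a + k) (by omega) v hv'
      refine ⟨by omega, h2', ?_⟩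
      rcases h3 with h3 | ⟨m, hm⟩
      · exact Or.inl h3
      · exact Or.inr ⟨m + 1, by rw [hm]; ring⟩
termination_by j - a

lemma ladder_isPath (n k : ℕ) (hk : 1 ≤ k) (j : ℕ) (hj : j < n) (a : ℕ) (ha : a ≤ j) :
    (ladder n k hk j hj a ha).IsPath := by
  rw [ladder]
  split_ifs with h h2
  · subst h
    simp
  · simp [SimpleGraph.Walk.cons_isPath_iff, Fin.ext_iff]
    omega
  · rw [SimpleGraph.Walk.cons_isPath_iff]
    refine ⟨ladder_isPath n k hk j hj (a + k) (by omega), fun hmem => ?_⟩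
    have := ladder_support n k hk j hj (a + k) (by omega) _ hmem
    simp at this
    omega
termination_by j - a

lemma ladder_support_self (n k : ℕ) (hk : 1 ≤ k) (j : ℕ) (hj : j < n) (ha : j ≤ j) :
    (ladder n k hk j hj j ha).support = [⟨j, hj⟩] := by
  rw [ladder]
  simp

/-- external detour vertex -/
def detourE (n i j s : ℕ) : ℕ := if j + s < n then j + s else i - (s - (n - 1 - j))

lemma detourE_spec (n k i j s : ℕ) (hk : 1 ≤ k) (hn : k < n) (hij : i < j) (hj : j < n)
    (hs1 : 1 ≤ s) (hs2 : s ≤ k - (j - i)) (hd : j - i < k) :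
    (detourE n i j s < i ∨ j < detourE n i j s) ∧ detourE n i j s < n ∧
    (i - detourE n i j s ≤ k ∧ detourE n i j s - i ≤ k) ∧
    (j - detourE n i j s ≤ k ∧ detourE n i j s - j ≤ k) := by
  unfold detourE
  split_ifs with h
  · omega
  · omega

lemma detourE_inj (n k i j s s' : ℕ) (hk : 1 ≤ k) (hn : k < n) (hij : i < j) (hj : j < n)
    (hs1 : 1 ≤ s) (hs2 : s ≤ k - (j - i)) (hs1' : 1 ≤ s') (hs2' : s' ≤ k - (j - i))
    (hd : j - i < k) (he : detourE n i j s = detourE n i j s') : s = s' := by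
  unfold detourE at he
  split_ifs at he <;> omega

def detourWalk (n k : ℕ) (hk : 1 ≤ k) (hn : k < n) (i j : ℕ) (hi : i < n) (hj : j < n)
    (hij : i < j) (s : ℕ) (hs1 : 1 ≤ s) (hs2 : s ≤ k - (j - i)) (hd : j - i < k) :
    (platoon n k).Walk ⟨i, hi⟩ ⟨j, hj⟩ :=
  SimpleGraph.Walk.cons
    (platoon_adj i (detourE n i j s) hi
      (detourE_spec n k i j s hk hn hij hj hs1 hs2 hd).2.1
      (by obtain ⟨h1, h2, h3, h4⟩ := detourE_spec n k i j s hk hn hij hj hs1 hs2 hd; omega)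
      (by obtain ⟨h1, h2, h3, h4⟩ := detourE_spec n k i j s hk hn hij hj hs1 hs2 hd; omega))
    (SimpleGraph.Walk.cons
      (platoon_adj (detourE n i j s) j
        (detourE_spec n k i j s hk hn hij hj hs1 hs2 hd).2.1 hj
        (by obtain ⟨h1, h2, h3, h4⟩ := detourE_spec n k i j s hk hn hij hj hs1 hs2 hd; omega)
        (by obtain ⟨h1, h2, h3, h4⟩ := detourE_spec n k i j s hk hn hij hj hs1 hs2 hd; omega))
      SimpleGraph.Walk.nil)

lemma detourWalk_support (n k : ℕ) (hk : 1 ≤ k) (hn : k < n) (i j : ℕ) (hi : i < n) (hj : j < n)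
    (hij : i < j) (s : ℕ) (hs1 : 1 ≤ s) (hs2 : s ≤ k - (j - i)) (hd : j - i < k) :
    (detourWalk n k hk hn i j hi hj hij s hs1 hs2 hd).support =
      [⟨i, hi⟩, ⟨detourE n i j s, (detourE_spec n k i j s hk hn hij hj hs1 hs2 hd).2.1⟩, ⟨j, hj⟩] :=
  rfl

lemma detourWalk_isPath (n k : ℕ) (hk : 1 ≤ k) (hn : k < n) (i j : ℕ) (hi : i < n) (hj : j < n)
    (hij : i < j) (s : ℕ) (hs1 : 1 ≤ s) (hs2 : s ≤ k - (j - i)) (hd : j - i < k) :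
    (detourWalk n k hk hn i j hi hj hij s hs1 hs2 hd).IsPath := by
  have h1 := (detourE_spec n k i j s hk hn hij hj hs1 hs2 hd).1
  simp [detourWalk, SimpleGraph.Walk.cons_isPath_iff, Fin.ext_iff]
  omega

def pWalk (n k : ℕ) (hk : 1 ≤ k) (hn : k < n) (i j : Fin n) (hij : i.1 < j.1) (a : Fin k) :
    (platoon n k).Walk i j :=
  if h : a.1 + 1 ≤ j.1 - i.1 then
    SimpleGraph.Walk.cons
      (platoon_adj i.1 (i.1 + (a.1 + 1)) i.2 (by have := j.2; omega) (by omega)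
        (by have := a.2; omega))
      (ladder n k hk j.1 j.2 (i.1 + (a.1 + 1)) (by omega))
  else
    detourWalk n k hk hn i.1 j.1 i.2 j.2 hij (a.1 + 1 - (j.1 - i.1))
      (by omega) (by have := a.2; omega) (by have := a.2; omega)

lemma pWalk_isPath (n k : ℕ) (hk : 1 ≤ k) (hn : k < n) (i j : Fin n) (hij : i.1 < j.1)
    (a : Fin k) : (pWalk n k hk hn i j hij a).IsPath := by
  rw [pWalk]
  split_ifs with h
  · rw [SimpleGraph.Walk.cons_isPath_iff]
    refine ⟨ladder_isPath n k hk j.1 j.2 _ _, fun hmem => ?_⟩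
    have h2 := (ladder_support n k hk j.1 j.2 _ (by omega) _ hmem).1
    omega
  · exact detourWalk_isPath n k hk hn i.1 j.1 i.2 j.2 hij _ _ _ _

lemma pWalk_internal (n k : ℕ) (hk : 1 ≤ k) (hn : k < n) (i j : Fin n) (hij : i.1 < j.1)
    (a : Fin k) (v : Fin n) (hv : v ∈ (pWalk n k hk hn i j hij a).support)
    (hvi : v ≠ i) (hvj : v ≠ j) :
    (∃ m, i.1 < v.1 ∧ v.1 < j.1 ∧ v.1 = i.1 + (a.1 + 1) + m * k) ∨
    ((v.1 < i.1 ∨ j.1 < v.1) ∧ v.1 = detourE n i.1 j.1 (a.1 + 1 - (j.1 - i.1)) ∧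
      j.1 - i.1 < a.1 + 1) := by
  have hvi' : v.1 ≠ i.1 := fun hh => hvi (Fin.ext hh)
  have hvj' : v.1 ≠ j.1 := fun hh => hvj (Fin.ext hh)
  rw [pWalk] at hv
  split_ifs at hv with h
  · left
    rw [SimpleGraph.Walk.support_cons, List.mem_cons] at hv
    rcases hv with rfl | hv'
    · simp at hvi'
    · obtain ⟨h1, h2, h3⟩ := ladder_support n k hk j.1 j.2 _ (by omega) v hv'
      rcases h3 with h3 | ⟨m, hm⟩
      · omega
      · exact ⟨m, by omega, by omega, by omega⟩
  · right
    rw [detourWalk_support] at hv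
    have h1 := (detourE_spec n k i.1 j.1 (a.1 + 1 - (j.1 - i.1)) hk hn hij j.2
      (by omega) (by have := a.2; omega) (by have := a.2; omega)).1
    simp [List.mem_cons, Fin.ext_iff] at hv
    rcases hv with hv | hv | hv
    · omega
    · exact ⟨by omega, by omega, by omega⟩
    · omega

lemma pWalk_has_internal (n k : ℕ) (hk : 1 ≤ k) (hn : k < n) (i j : Fin n) (hij : i.1 < j.1)
    (a : Fin k) (h : a.1 + 1 ≠ j.1 - i.1) :
    ∃ v, v ∈ (pWalk n k hk hn i j hij a).support ∧ v ≠ i ∧ v ≠ j := by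
  rw [pWalk]
  split_ifs with hle
  · refine ⟨⟨i.1 + (a.1 + 1), by have := j.2; omega⟩, ?_, ?_, ?_⟩
    · rw [SimpleGraph.Walk.support_cons, List.mem_cons]
      exact Or.inr (SimpleGraph.Walk.start_mem_support _)
    · simp [Fin.ext_iff]
    · simp [Fin.ext_iff]; omega
  · have h1 := (detourE_spec n k i.1 j.1 (a.1 + 1 - (j.1 - i.1)) hk hn hij j.2
      (by omega) (by have := a.2; omega) (by have := a.2; omega)).1
    refine ⟨⟨detourE n i.1 j.1 (a.1 + 1 - (j.1 - i.1)), ?_⟩, ?_, ?_, ?_⟩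
    · exact (detourE_spec n k i.1 j.1 _ hk hn hij j.2
        (by omega) (by have := a.2; omega) (by have := a.2; omega)).2.1
    · rw [detourWalk_support]
      simp
    · simp [Fin.ext_iff]; omega
    · simp [Fin.ext_iff]; omega

lemma cancel_lemma (k t t' m m' : ℕ) (ht : 1 ≤ t) (ht2 : t ≤ k) (ht' : 1 ≤ t') (ht2' : t' ≤ k)
    (he : t + m * k = t' + m' * k) : t = t' := by
  have hmod : t % k = t' % k := by
    rw [← Nat.add_mul_mod_self_right t m k, he, Nat.add_mul_mod_self_right]
  rcases eq_or_lt_of_le ht2 with rfl | hlt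
  · rcases eq_or_lt_of_le ht2' with rfl | hlt'
    · rfl
    · rw [Nat.mod_self, Nat.mod_eq_of_lt hlt'] at hmod; omega
  · rw [Nat.mod_eq_of_lt hlt] at hmod
    rcases eq_or_lt_of_le ht2' with rfl | hlt'
    · rw [Nat.mod_self] at hmod; omega
    · rw [Nat.mod_eq_of_lt hlt'] at hmod; exact hmod

/-- Menger-type form of the `k`-connectivity of `P(n,k)`: between any two vertices
`i < j` there are `k` pairwise internally vertex-disjoint paths. -/
theorem stmt_19 (n k : ℕ) (hk : 1 ≤ k) (hn : k < n) (i j : Fin n) (hij : i < j) :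
    ∃ P : Fin k → (platoon n k).Path i j,
      Function.Injective P ∧
      ∀ a b : Fin k, a ≠ b → ∀ v : Fin n,
        v ∈ (P a).1.support → v ∈ (P b).1.support → v = i ∨ v = j := by
  have hij' : i.1 < j.1 := hij
  refine ⟨fun a => ⟨pWalk n k hk hn i j hij' a, pWalk_isPath n k hk hn i j hij' a⟩, ?_, ?_⟩
  · -- injectivity; we first reprove the disjointness fact
    have hdisj : ∀ a b : Fin k, a ≠ b → ∀ v : Fin n,
        v ∈ (pWalk n k hk hn i j hij' a).support →
        v ∈ (pWalk n k hk hn i j hij' b).support → v = i ∨ v = j := by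
      intro a b hab v hva hvb
      by_contra hcon
      push_neg at hcon
      obtain ⟨hvi, hvj⟩ := hcon
      have hab' : a.1 ≠ b.1 := fun hh => hab (Fin.ext hh)
      have Ha := pWalk_internal n k hk hn i j hij' a v hva hvi hvj
      have Hb := pWalk_internal n k hk hn i j hij' b v hvb hvi hvj
      rcases Ha with ⟨m, h1, h2, h3⟩ | ⟨h1, h2, h3⟩ <;>
        rcases Hb with ⟨m', h1', h2', h3'⟩ | ⟨h1', h2', h3'⟩
      · have := cancel_lemma k (a.1 + 1) (b.1 + 1) m m'
          (by omega) (by have := a.2; omega) (by omega) (by have := b.2; omega) (by omega)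
        omega
      · omega
      · omega
      · have := detourE_inj n k i.1 j.1 (a.1 + 1 - (j.1 - i.1)) (b.1 + 1 - (j.1 - i.1))
          hk hn hij' j.2 (by omega) (by have := a.2; omega)
          (by omega) (by have := b.2; omega) (by have := a.2; omega) (by omega)
        omega
    intro a b hPab
    by_contra hab
    have hw : (pWalk n k hk hn i j hij' a) = (pWalk n k hk hn i j hij' b) :=
      congrArg Subtype.val hPab
    have hsupp := congrArg SimpleGraph.Walk.support hw
    have hone : a.1 + 1 ≠ j.1 - i.1 ∨ b.1 + 1 ≠ j.1 - i.1 := by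
      have : a.1 ≠ b.1 := fun hh => hab (Fin.ext hh)
      omega
    rcases hone with h | h
    · obtain ⟨v, hv, hvi, hvj⟩ := pWalk_has_internal n k hk hn i j hij' a h
      rcases hdisj a b hab v hv (hsupp ▸ hv) with rfl | rfl
      · exact hvi rfl
      · exact hvj rfl
    · obtain ⟨v, hv, hvi, hvj⟩ := pWalk_has_internal n k hk hn i j hij' b h
      rcases hdisj a b hab v (hsupp ▸ hv) hv with rfl | rfl
      · exact hvi rfl
      · exact hvj rfl
  · intro a b hab v hva hvb
    by_contra hcon
    push_neg at hcon
    obtain ⟨hvi, hvj⟩ := hcon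
    have hab' : a.1 ≠ b.1 := fun hh => hab (Fin.ext hh)
    have Ha := pWalk_internal n k hk hn i j hij' a v hva hvi hvj
    have Hb := pWalk_internal n k hk hn i j hij' b v hvb hvi hvj
    rcases Ha with ⟨m, h1, h2, h3⟩ | ⟨h1, h2, h3⟩ <;>
      rcases Hb with ⟨m', h1', h2', h3'⟩ | ⟨h1', h2', h3'⟩
    · have := cancel_lemma k (a.1 + 1) (b.1 + 1) m m'
        (by omega) (by have := a.2; omega) (by omega) (by have := b.2; omega) (by omega)
      omega
    · omega
    · omega
    · have := detourE_inj n k i.1 j.1 (a.1 + 1 - (j.1 - i.1)) (b.1 + 1 - (j.1 - i.1))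
        hk hn hij' j.2 (by omega) (by have := a.2; omega)
        (by omega) (by have := b.2; omega) (by have := a.2; omega) (by omega)
      omega
end
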